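/- Good distinguishing formulas yield directed apartness: in an LTS with reflexive silent steps, if a good HMLU formula φ satisfies p ⊨ φ and q ⊭ φ, then p and q are branching apart (symmetric closure of directed branching apartness); moreover if φ is positive then p is directed branching apart from q, and if φ is negative then q is directed branching apart from p. -/
import Mathlib


variable {X A : Type*}

/-- Formulas of Hennessy-Milner Logic with Until. `none` is the silent action τ. -/
inductive HMLU (A : Type*) where
  | top : HMLU A
  | neg : HMLU A → HMLU A
  | and : HMLU A → HMLU A → HMLU A
  | dia : HMLU A → Option A → HMLU A → HMLU A

/-- Satisfaction: `p ⊨ δ⟨α⟩ψ` iff there is a τ-path from `p` along which every state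
satisfies `δ`, ending in a state that `α`-steps to a state satisfying `ψ`. -/
def Sat (step : Option A → X → X → Prop) : HMLU A → X → Prop
  | .top, _ => True
  | .neg φ, p => ¬ Sat step φ p
  | .and φ ψ, p => Sat step φ p ∧ Sat step ψ p
  | .dia δ α ψ, p => ∃ p' p'', Sat step δ p ∧
      Relation.ReflTransGen (fun x y => step none x y ∧ Sat step δ y) p p' ∧
      step α p' p'' ∧ Sat step ψ p''

mutual
  /-- Positive HMLU formulas. -/
  inductive Positive : HMLU A → Prop
    | top : Positive .top
    | neg {φ : HMLU A} : Negative φ → Positive (.neg φ)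
    | and {φ ψ : HMLU A} : Positive φ → Positive ψ → Positive (.and φ ψ)
    | dia {δ ψ : HMLU A} {α : Option A} : Positive δ → Positive (.dia δ α ψ)
  /-- Negative HMLU formulas. -/
  inductive Negative : HMLU A → Prop
    | top : Negative .top
    | neg {φ : HMLU A} : Positive φ → Negative (.neg φ)
    | and {φ ψ : HMLU A} : Negative φ → Negative ψ → Negative (.and φ ψ)
end

/-- Good formulas: every diamond subformula has a positive left-hand side. -/
inductive Good : HMLU A → Prop
  | top : Good .top
  | neg {φ : HMLU A} : Good φ → Good (.neg φ)
  | and {φ ψ : HMLU A} : Good φ → Good ψ → Good (.and φ ψ)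
  | dia {δ ψ : HMLU A} {α : Option A} : Positive δ → Good δ → Good ψ → Good (.dia δ α ψ)

/-- `Q` is a directed branching apartness relation. -/
def IsDBApartRel (step : Option A → X → X → Prop) (Q : X → X → Prop) : Prop :=
  ∀ (α : Option A) (p p' q : X), step α p p' →
    (∀ q' q'', Relation.ReflTransGen (step none) q q' → step α q' q'' →
      Q p q' ∨ Q p' q'' ∨ Q q'' p') → Q p q

/-- Directed branching apartness: the least directed branching apartness relation. -/
def DBApart (step : Option A → X → X → Prop) (p q : X) : Prop :=
  ∀ Q : X → X → Prop, IsDBApartRel step Q → Q p q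

/-- A directed branching bisimulation-like relation. -/
def IsDBB (step : Option A → X → X → Prop) (B : X → X → Prop) : Prop :=
  ∀ p q, B p q → ∀ (α : Option A) (p' : X), step α p p' →
    ∃ q' q'', Relation.ReflTransGen (step none) q q' ∧ step α q' q'' ∧
      B p q' ∧ B p' q'' ∧ B q'' p'

/-- The τ-predecessor closure of a relation. -/
def ClB (step : Option A → X → X → Prop) (B : X → X → Prop) (p v : X) : Prop :=
  ∃ u, Relation.ReflTransGen (step none) v u ∧ B p u

lemma clB_isDBB (step : Option A → X → X → Prop) (B : X → X → Prop)
    (hB : IsDBB step B) : IsDBB step (ClB step B) := by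
  rintro p q ⟨u, hqu, hpu⟩ α p' hstep
  obtain ⟨q', q'', hr, hs, h1, h2, h3⟩ := hB p u hpu α p' hstep
  exact ⟨q', q'', hqu.trans hr, hs, ⟨q', .refl, h1⟩, ⟨q'', .refl, h2⟩, ⟨p', .refl, h3⟩⟩

lemma clB_closed (step : Option A → X → X → Prop) (B : X → X → Prop)
    {p v u : X} (h : Relation.ReflTransGen (step none) v u) (hu : ClB step B p u) :
    ClB step B p v := by
  obtain ⟨w, huw, hpw⟩ := hu
  exact ⟨w, h.trans huw, hpw⟩

/-- Invariance of good formulas along closed directed branching bisimulations. -/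
lemma dbb_invariance (step : Option A → X → X → Prop) (B : X → X → Prop)
    (hB : IsDBB step B)
    (hcl : ∀ x v u, Relation.ReflTransGen (step none) v u → B x u → B x v)
    (φ : HMLU A) (hgood : Good φ) :
    (Positive φ → ∀ p q, B p q → Sat step φ p → Sat step φ q) ∧
    (Negative φ → ∀ p q, B p q → Sat step φ q → Sat step φ p) ∧
    (∀ p q, B p q → B q p → Sat step φ p → Sat step φ q) := by
  induction hgood with
  | top =>
    refine ⟨fun _ _ _ _ _ => trivial, fun _ _ _ _ _ => trivial, fun _ _ _ _ _ => trivial⟩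
  | @neg φ hg ih =>
    refine ⟨?_, ?_, ?_⟩
    · rintro hpos p q hpq hp hq
      cases hpos with
      | neg hneg => exact hp (ih.2.1 hneg p q hpq hq)
    · rintro hneg p q hpq hq hp
      cases hneg with
      | neg hpos => exact hq (ih.1 hpos p q hpq hp)
    · rintro p q hpq hqp hp hq
      exact hp (ih.2.2 q p hqp hpq hq)
  | @and φ ψ hg1 hg2 ih1 ih2 =>
    refine ⟨?_, ?_, ?_⟩
    · rintro hpos p q hpq ⟨h1, h2⟩
      cases hpos with
      | and hp1 hp2 => exact ⟨ih1.1 hp1 p q hpq h1, ih2.1 hp2 p q hpq h2⟩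
    · rintro hneg p q hpq ⟨h1, h2⟩
      cases hneg with
      | and hn1 hn2 => exact ⟨ih1.2.1 hn1 p q hpq h1, ih2.2.1 hn2 p q hpq h2⟩
    · rintro p q hpq hqp ⟨h1, h2⟩
      exact ⟨ih1.2.2 p q hpq hqp h1, ih2.2.2 p q hpq hqp h2⟩
  | @dia δ ψ α hδpos hgδ hgψ ihδ ihψ =>
    have hPδ : ∀ p q, B p q → Sat step δ p → Sat step δ q := ihδ.1 hδpos
    have hGψ : ∀ p q, B p q → B q p → Sat step ψ p → Sat step ψ q := ihψ.2.2
    -- τ-paths to B-related states can be decorated with δ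
    have pathδ : ∀ (x y y' : X), Sat step δ x → B x y' →
        Relation.ReflTransGen (step none) y y' →
        Relation.ReflTransGen (fun a b => step none a b ∧ Sat step δ b) y y' := by
      intro x y y' hδx hB' hr
      induction hr using Relation.ReflTransGen.head_induction_on with
      | refl => exact .refl
      | head h' h ih =>
        exact .head ⟨h', hPδ x _ (hcl x _ y' h hB') hδx⟩ ih
    have key : ∀ p q, B p q → Sat step (.dia δ α ψ) p → Sat step (.dia δ α ψ) q := by
      intro p q hpq hp
      obtain ⟨p1, p2, hδp, hpath, hstep, hψ⟩ := hp
      suffices L : ∀ x, Relation.ReflTransGen (fun a b => step none a b ∧ Sat step δ b) x p1 →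
          Sat step δ x → ∀ y, B x y → ∃ q1 q2,
            Relation.ReflTransGen (fun a b => step none a b ∧ Sat step δ b) y q1 ∧
            step α q1 q2 ∧ Sat step ψ q2 by
        obtain ⟨q1, q2, h1, h2, h3⟩ := L p hpath hδp q hpq
        exact ⟨q1, q2, hPδ p q hpq hδp, h1, h2, h3⟩
      intro x hx
      induction hx using Relation.ReflTransGen.head_induction_on with
      | refl =>
        intro hδx y hxy
        obtain ⟨q', q'', hr, hs, h1, h2, h3⟩ := hB p1 y hxy α p2 hstep
        exact ⟨q', q'', pathδ p1 y q' hδx h1 hr, hs, hGψ p2 q'' h2 h3 hψ⟩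
      | @head x v h' htail ih =>
        intro hδx y hxy
        obtain ⟨u', u'', hr, hs, h1, h2, h3⟩ := hB x y hxy none v h'.1
        obtain ⟨q1, q2, hq1, hq2, hq3⟩ := ih h'.2 u'' h2
        refine ⟨q1, q2, ?_, hq2, hq3⟩
        exact (pathδ x y u' hδx h1 hr).trans
          ((Relation.ReflTransGen.single ⟨hs, hPδ v u'' h2 h'.2⟩).trans hq1)
    refine ⟨fun _ => key, ?_, fun p q hpq _ => key p q hpq⟩
    rintro hneg
    cases hneg

lemma compl_dbb (step : Option A → X → X → Prop) (Q : X → X → Prop)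
    (hQ : IsDBApartRel step Q) : IsDBB step (fun x y => ¬ Q x y) := by
  intro p q hpq α p' hstep
  by_contra hcon
  refine hpq (hQ α p p' q hstep fun q' q'' hr hs => ?_)
  by_cases h1 : Q p q'
  · exact Or.inl h1
  by_cases h2 : Q p' q''
  · exact Or.inr (Or.inl h2)
  by_cases h3 : Q q'' p'
  · exact Or.inr (Or.inr h3)
  exact absurd ⟨q', q'', hr, hs, h1, h2, h3⟩ hcon

theorem good_distinguishing_gives_dbApart (step : Option A → X → X → Prop)
    (htau : ∀ p : X, step none p p) (φ : HMLU A) (hgood : Good φ) (p q : X)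
    (hp : Sat step φ p) (hq : ¬ Sat step φ q) :
    (DBApart step p q ∨ DBApart step q p) ∧
    (Positive φ → DBApart step p q) ∧
    (Negative φ → DBApart step q p) := by
  have inv := fun (B : X → X → Prop) (hB : IsDBB step B) =>
    dbb_invariance step (ClB step B) (clB_isDBB step B hB)
      (fun x v u h hu => clB_closed step B h hu) φ hgood
  refine ⟨?_, ?_, ?_⟩
  · by_contra hcon
    push_neg at hcon
    obtain ⟨h1, h2⟩ := hcon
    simp only [DBApart, not_forall] at h1 h2
    obtain ⟨Q1, hQ1, hn1⟩ := h1
    obtain ⟨Q2, hQ2, hn2⟩ := h2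
    have hB : IsDBB step (fun x y => ¬ Q1 x y ∨ ¬ Q2 x y) := by
      intro a b hab α a' hstep
      cases hab with
      | inl h =>
        obtain ⟨q', q'', hr, hs, c1, c2, c3⟩ := compl_dbb step Q1 hQ1 a b h α a' hstep
        exact ⟨q', q'', hr, hs, Or.inl c1, Or.inl c2, Or.inl c3⟩
      | inr h =>
        obtain ⟨q', q'', hr, hs, c1, c2, c3⟩ := compl_dbb step Q2 hQ2 a b h α a' hstep
        exact ⟨q', q'', hr, hs, Or.inr c1, Or.inr c2, Or.inr c3⟩
    exact hq ((inv _ hB).2.2 p q ⟨q, .refl, Or.inl hn1⟩ ⟨p, .refl, Or.inr hn2⟩ hp)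
  · intro hpos Q hQ
    by_contra hn
    exact hq ((inv _ (compl_dbb step Q hQ)).1 hpos p q ⟨q, .refl, hn⟩ hp)
  · intro hneg Q hQ
    by_contra hn
    exact hq ((inv _ (compl_dbb step Q hQ)).2.1 hneg q p ⟨p, .refl, hn⟩ hp)
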